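/- Let M be a Riemann-Roch monomial ideal of genus g with canonical monomial x^K. Then degree(x^K) = 2g − 2 and rank(x^K) = g − 2. -/

import Mathlib

/-! For a socle monomial `c`, reflection gives another socle monomial `K - c`, so level-ness
yields `deg K - deg c = g - 1 = deg c`, i.e. `deg K = 2g - 2`. Since `c ≤ K` coordinatewise,
`degree⁺(K - c) = deg K - deg c = g - 1` for every socle `c`, so the minimum defining the rank
is `g - 1` as soon as the socle is nonempty, which the artinian hypothesis guarantees. -/

open Finset

/-- A set of exponent vectors is a monomial ideal iff it is upward closed. -/
def UpClosed {m : ℕ} (M : Set (Fin m → ℕ)) : Prop :=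
  ∀ u ∈ M, ∀ v : Fin m → ℕ, (∀ i, u i ≤ v i) → v ∈ M

/-- Artinian: a power of each variable lies in `M`. -/
def ArtinianMono {m : ℕ} (M : Set (Fin m → ℕ)) : Prop :=
  ∀ i : Fin m, ∃ k : ℕ, (fun j => if j = i then k else 0) ∈ M

/-- Socle monomials: `x^c ∉ M` with `x_i·x^c ∈ M` for all `i`. -/
def MonSoc {m : ℕ} (M : Set (Fin m → ℕ)) : Set (Fin m → ℕ) :=
  {c | c ∉ M ∧ ∀ i : Fin m, (fun j => c j + if j = i then 1 else 0) ∈ M}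

/-- `degree⁺(u)`: the sum of the positive coordinates of `u`. -/
def degP {m : ℕ} (w : Fin m → ℤ) : ℤ := ∑ i, max (w i) 0

/-- total degree -/
def degZ {m : ℕ} (w : Fin m → ℤ) : ℤ := ∑ i, w i

def zvec {m : ℕ} (b : Fin m → ℕ) : Fin m → ℤ := fun i => (b i : ℤ)

/-- rank of a Laurent monomial `x^b` with respect to `M`. -/
noncomputable def rnk {m : ℕ} (M : Set (Fin m → ℕ)) (b : Fin m → ℤ) : ℤ :=
  sInf ((fun c => degP (b - zvec c)) '' MonSoc M) - 1

/-- `M` is level of genus `g`: all socle monomials have degree `g - 1`. -/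
def LevelOf {m : ℕ} (M : Set (Fin m → ℕ)) (g : ℤ) : Prop :=
  ∀ c ∈ MonSoc M, degZ (zvec c) = g - 1

/-- Reflection invariance with canonical monomial `x^K`. -/
def ReflInv {m : ℕ} (M : Set (Fin m → ℕ)) (K : Fin m → ℕ) : Prop :=
  ∀ c ∈ MonSoc M, (∀ i, c i ≤ K i) ∧ (fun i => K i - c i) ∈ MonSoc M


lemma lt_of_not_mem_of_upClosed {m : ℕ} {M : Set (Fin m → ℕ)} (hup : UpClosed M) {i : Fin m}
    {k : ℕ} (hk : (fun j => if j = i then k else 0) ∈ M) {c : Fin m → ℕ} (hc : c ∉ M) :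
    c i < k := by
  by_contra! hki
  refine hc (hup _ hk c fun j => ?_)
  split_ifs with hji
  · exact hji ▸ hki
  · exact Nat.zero_le _

lemma monSoc_nonempty {m : ℕ} {M : Set (Fin m → ℕ)} (hup : UpClosed M)
    (hart : ArtinianMono M) (hproper : (0 : Fin m → ℕ) ∉ M) : (MonSoc M).Nonempty := by
  choose k hk using hart
  classical
  -- the complement of `M` is finite, so it has an element of maximal degree, which is a socle monomial
  let outside := (Fintype.piFinset fun i => range (k i)).filter (· ∉ M)
  have mem_outside {c : Fin m → ℕ} (hc : c ∉ M) : c ∈ outside := by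
    simpa [outside, hc] using fun i => lt_of_not_mem_of_upClosed hup (hk i) hc
  obtain ⟨c, hc, hmax⟩ :=
    outside.exists_max_image (fun c => ∑ i, c i) ⟨0, mem_outside hproper⟩
  refine ⟨c, (mem_filter.1 hc).2, fun i => ?_⟩
  by_contra hci
  have := hmax _ (mem_outside hci)
  simp only [sum_add_distrib, sum_ite_eq', mem_univ, if_true] at this
  omega

lemma zvec_sub_of_le {m : ℕ} {c K : Fin m → ℕ} (h : c ≤ K) :
    zvec (K - c) = zvec K - zvec c := by
  ext i
  exact Int.ofNat_sub (h i)

lemma degZ_sub {m : ℕ} (u v : Fin m → ℤ) : degZ (u - v) = degZ u - degZ v :=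
  sum_sub_distrib _ _

lemma degP_eq_degZ_of_nonneg {m : ℕ} {w : Fin m → ℤ} (h : 0 ≤ w) : degP w = degZ w :=
  sum_congr rfl fun i _ => max_eq_left (h i)

section Canonical

variable {m : ℕ} {M : Set (Fin m → ℕ)} {g : ℤ} {K : Fin m → ℕ}

lemma degZ_canonical_sub (hlev : LevelOf M g) (hrefl : ReflInv M K) {c : Fin m → ℕ}
    (hc : c ∈ MonSoc M) : degZ (zvec K) - degZ (zvec c) = g - 1 := by
  obtain ⟨hcK, hdual⟩ := hrefl c hc
  rw [← degZ_sub, ← zvec_sub_of_le hcK]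
  exact hlev _ hdual

lemma degZ_canonical (hlev : LevelOf M g) (hrefl : ReflInv M K) {c : Fin m → ℕ}
    (hc : c ∈ MonSoc M) : degZ (zvec K) = 2 * g - 2 := by
  linarith [degZ_canonical_sub hlev hrefl hc, hlev c hc]

lemma degP_canonical_sub (hlev : LevelOf M g) (hrefl : ReflInv M K) {c : Fin m → ℕ}
    (hc : c ∈ MonSoc M) : degP (zvec K - zvec c) = g - 1 := by
  have hcK : c ≤ K := (hrefl c hc).1
  have hnonneg : 0 ≤ zvec K - zvec c := fun i => sub_nonneg.2 (Int.ofNat_le.2 (hcK i))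
  rw [degP_eq_degZ_of_nonneg hnonneg, degZ_sub]
  exact degZ_canonical_sub hlev hrefl hc

lemma rnk_canonical (hlev : LevelOf M g) (hrefl : ReflInv M K) (hsoc : (MonSoc M).Nonempty) :
    rnk M (zvec K) = g - 2 := by
  have himage : (fun c => degP (zvec K - zvec c)) '' MonSoc M = {g - 1} := by
    rw [Set.image_congr fun c hc => degP_canonical_sub hlev hrefl hc, hsoc.image_const]
  rw [rnk, himage, csInf_singleton]
  ring

end Canonical

/-- the canonical monomial has degree `2g - 2` and rank `g - 2`. -/
theorem stmt4 {m : ℕ} (M : Set (Fin m → ℕ)) (g : ℤ) (K : Fin m → ℕ)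
    (hup : UpClosed M) (hart : ArtinianMono M) (hproper : (0 : Fin m → ℕ) ∉ M)
    (hlev : LevelOf M g) (hrefl : ReflInv M K) :
    degZ (zvec K) = 2 * g - 2 ∧ rnk M (zvec K) = g - 2 := by
  have hsoc := monSoc_nonempty hup hart hproper
  exact ⟨degZ_canonical hlev hrefl hsoc.some_mem, rnk_canonical hlev hrefl hsoc⟩
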